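/- (Gated stability step with gradient estimation error.) Let H be a real inner product space, β > 0, L ≥ 0, E ≥ 0, λ ∈ [0,1]. Let f₁, f₂, f₃ : H → ℝ be convex differentiable functions whose gradients are β-Lipschitz, with ‖∇f₂(θ)‖ ≤ L and ‖∇f₃(θ)‖ ≤ L for all θ. Define F = λf₁ + (1−λ)f₂ and F' = λf₁ + (1−λ)f₃, and let ĝ, ĝ' : H → H be approximate gradient maps satisfying ‖ĝ(θ) − ∇F(θ)‖ ≤ E and ‖ĝ'(θ) − ∇F'(θ)‖ ≤ E for all θ. Then for every step size α with 0 < α ≤ 2/β and all θ, θ' ∈ H, ‖(θ − α ĝ(θ)) − (θ' − α ĝ'(θ'))‖ ≤ ‖θ − θ'‖ + 2α((1−λ)L + E). -/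

import Mathlib

open scoped RealInnerProductSpace

section aux
variable {H : Type*} [NormedAddCommGroup H] [InnerProductSpace ℝ H]

lemma line_hasDerivAt (f : H → ℝ) (g : H → H)
    (hdiff : ∀ θ, HasFDerivAt f ((innerSL ℝ) (g θ)) θ) (x d : H) (t : ℝ) :
    HasDerivAt (fun t : ℝ => f (x + t • d)) ⟪g (x + t • d), d⟫ t := by
  have hc : HasDerivAt (fun t : ℝ => x + t • d) d t := by
    simpa using ((hasDerivAt_id t).smul_const d).const_add x
  exact ((hdiff (x + t • d)).comp_hasDerivAt t hc).congr_deriv (by simp)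

/-- First-order condition for convex differentiable functions. -/
lemma convex_lower (f : H → ℝ) (g : H → H)
    (hconv : ConvexOn ℝ Set.univ f)
    (hdiff : ∀ θ, HasFDerivAt f ((innerSL ℝ) (g θ)) θ) (x y : H) :
    f x + ⟪g x, y - x⟫ ≤ f y := by
  set φ : ℝ → ℝ := fun t => f (x + t • (y - x)) with hφ
  have hφconv : ConvexOn ℝ Set.univ φ := by
    have := hconv.comp_affineMap
      (AffineMap.mk (fun t : ℝ => x + t • (y - x))
        { toFun := fun t : ℝ => t • (y - x)
          map_add' := fun a b => add_smul a b (y - x)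
          map_smul' := fun a b => by simp [mul_smul] }
        (fun p v => by simp [add_smul]; abel))
    exact this
  have hd : HasDerivAt φ ⟪g x, y - x⟫ 0 := by
    simpa using line_hasDerivAt f g hdiff x (y - x) 0
  have := hφconv.le_slope_of_hasDerivAt (Set.mem_univ 0) (Set.mem_univ 1)
    (by norm_num) hd
  have hs : slope φ 0 1 = f y - f x := by
    simp [slope_def_field, hφ]
  rw [hs] at this
  linarith

/-- Descent lemma for functions with β-Lipschitz gradients. -/
lemma descent (f : H → ℝ) (g : H → H) (β : ℝ) (hβ : 0 < β)
    (hdiff : ∀ θ, HasFDerivAt f ((innerSL ℝ) (g θ)) θ)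
    (hlip : ∀ a b, ‖g a - g b‖ ≤ β * ‖a - b‖) (x y : H) :
    f y ≤ f x + ⟪g x, y - x⟫ + β / 2 * ‖y - x‖ ^ 2 := by
  set d : H := y - x with hd
  set ψ : ℝ → ℝ := fun t => f (x + t • d) - t * ⟪g x, d⟫ - β / 2 * t ^ 2 * ‖d‖ ^ 2 with hψ
  have hψd : ∀ t : ℝ, HasDerivAt ψ
      (⟪g (x + t • d), d⟫ - ⟪g x, d⟫ - β * t * ‖d‖ ^ 2) t := by
    intro t
    have h1 := line_hasDerivAt f g hdiff x d t
    have h2 : HasDerivAt (fun t : ℝ => t * ⟪g x, d⟫) ⟪g x, d⟫ t := by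
      simpa using (hasDerivAt_id t).mul_const ⟪g x, d⟫
    have h3 : HasDerivAt (fun t : ℝ => β / 2 * t ^ 2 * ‖d‖ ^ 2)
        (β * t * ‖d‖ ^ 2) t := by
      have := ((hasDerivAt_pow 2 t).const_mul (β / 2)).mul_const (‖d‖ ^ 2)
      refine this.congr_deriv ?_
      rw [show (2 - 1 : ℕ) = 1 from rfl]
      push_cast
      ring
    exact (h1.sub h2).sub h3
  have hanti : AntitoneOn ψ (Set.Icc 0 1) := by
    apply antitoneOn_of_deriv_nonpos (convex_Icc 0 1)
    · exact fun t _ => (hψd t).differentiableAt.continuousAt.continuousWithinAt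
    · exact fun t _ => ((hψd t).differentiableAt).differentiableWithinAt
    · intro t ht
      rw [interior_Icc] at ht
      rw [(hψd t).deriv]
      have hi : ⟪g (x + t • d) - g x, d⟫ ≤ β * t * ‖d‖ ^ 2 := by
        calc ⟪g (x + t • d) - g x, d⟫ ≤ ‖g (x + t • d) - g x‖ * ‖d‖ :=
              real_inner_le_norm _ _
          _ ≤ β * ‖(x + t • d) - x‖ * ‖d‖ := by
              have := hlip (x + t • d) x
              nlinarith [norm_nonneg d]
          _ = β * t * ‖d‖ ^ 2 := by
              rw [add_sub_cancel_left, norm_smul, Real.norm_eq_abs,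
                abs_of_pos ht.1]
              ring
      rw [inner_sub_left] at hi
      linarith
  have h01 := hanti (Set.left_mem_Icc.2 zero_le_one) (Set.right_mem_Icc.2 zero_le_one)
    zero_le_one
  have h0 : ψ 0 = f x := by simp [hψ]
  have h1 : ψ 1 = f y - ⟪g x, d⟫ - β / 2 * ‖d‖ ^ 2 := by
    simp [hψ, hd]
  rw [h0, h1] at h01
  linarith

/-- Co-coercivity of the gradient of a convex β-smooth function. -/
lemma cocoercive (f : H → ℝ) (g : H → H) (β : ℝ) (hβ : 0 < β)
    (hconv : ConvexOn ℝ Set.univ f)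
    (hdiff : ∀ θ, HasFDerivAt f ((innerSL ℝ) (g θ)) θ)
    (hlip : ∀ a b, ‖g a - g b‖ ≤ β * ‖a - b‖) (x y : H) :
    (1 / β) * ‖g y - g x‖ ^ 2 ≤ ⟪g y - g x, y - x⟫ := by
  have key : ∀ a b : H, f a + ⟪g a, b - a⟫ + 1 / β / 2 * ‖g b - g a‖ ^ 2 ≤ f b := by
    intro a b
    set Δ : H := g b - g a with hΔ
    set b' : H := b - (1 / β) • Δ with hb'
    have hlow := convex_lower f g hconv hdiff a b'
    have hdes := descent f g β hβ hdiff hlip b b'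
    have e1 : ⟪g a, b' - a⟫ = ⟪g a, b - a⟫ - (1 / β) * ⟪g a, Δ⟫ := by
      simp [hb', sub_right_comm, inner_sub_right, inner_smul_right]
    have e2 : ⟪g b, b' - b⟫ = -(1 / β) * ⟪g b, Δ⟫ := by
      simp [hb', inner_smul_right]
    have e3 : ‖b' - b‖ ^ 2 = (1 / β) ^ 2 * ‖Δ‖ ^ 2 := by
      have : b' - b = -((1 / β) • Δ) := by simp [hb']
      rw [this, norm_neg, norm_smul, mul_pow, Real.norm_eq_abs, sq_abs]
    have e4 : ⟪g b, Δ⟫ - ⟪g a, Δ⟫ = ‖Δ‖ ^ 2 := by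
      rw [← inner_sub_left, ← hΔ, real_inner_self_eq_norm_sq]
    rw [e1] at hlow
    rw [e2, e3] at hdes
    have hβ' : β ≠ 0 := ne_of_gt hβ
    have : f a + (⟪g a, b - a⟫ - (1 / β) * ⟪g a, Δ⟫) ≤
        f b + -(1 / β) * ⟪g b, Δ⟫ + β / 2 * ((1 / β) ^ 2 * ‖Δ‖ ^ 2) := le_trans hlow hdes
    have hfield : β / 2 * ((1 / β) ^ 2 * ‖Δ‖ ^ 2) = 1 / β / 2 * ‖Δ‖ ^ 2 := by
      field_simp
    have e5 : 1 / β * (⟪g b, Δ⟫ - ⟪g a, Δ⟫) = 1 / β * ‖Δ‖ ^ 2 := by rw [e4]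
    have e6 : 1 / β * (⟪g b, Δ⟫ - ⟪g a, Δ⟫) = 1 / β * ⟪g b, Δ⟫ - 1 / β * ⟪g a, Δ⟫ := by ring
    linarith [this]
  have h1 := key x y
  have h2 := key y x
  have e : ‖g x - g y‖ = ‖g y - g x‖ := norm_sub_rev _ _
  have e2 : ⟪g y, x - y⟫ = -⟪g y, y - x⟫ := by
    rw [← inner_neg_right]; congr 1; abel
  have e3 : ⟪g y - g x, y - x⟫ = ⟪g y, y - x⟫ - ⟪g x, y - x⟫ := inner_sub_left _ _ _
  rw [e] at h2
  rw [e2] at h2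
  have hβ' : (0:ℝ) < 2 * β := by linarith
  rw [e3]
  linarith [h1, h2]

end aux

set_option maxHeartbeats 1000000 in
/-- **Gated single-step stability bound with gradient estimation error.**
Let `f₁, f₂, f₃` be convex differentiable with `β`-Lipschitz gradients
`g₁, g₂, g₃`, `‖g₂‖, ‖g₃‖ ≤ L`, and `lam ∈ [0,1]`. For
`F = lam • f₁ + (1 - lam) • f₂` and `F' = lam • f₁ + (1 - lam) • f₃` (whose
gradients are `lam • g₁ + (1 - lam) • g₂` and `lam • g₁ + (1 - lam) • g₃`),
let `ĝ, ĝ'` be approximate gradient maps within distance `E` of `∇F, ∇F'`.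
Then for `0 < α ≤ 2/β`,
`‖(θ - α • ĝ θ) - (θ' - α • ĝ' θ')‖ ≤ ‖θ - θ'‖ + 2 α ((1 - lam) L + E)`. -/
theorem gated_stability_with_gradient_estimation_error
    {H : Type*} [NormedAddCommGroup H] [InnerProductSpace ℝ H]
    (f₁ f₂ f₃ : H → ℝ) (g₁ g₂ g₃ ghat ghat' : H → H) (β L E lam : ℝ)
    (hβ : 0 < β) (hL : 0 ≤ L) (hE : 0 ≤ E) (hlam0 : 0 ≤ lam) (hlam1 : lam ≤ 1)
    (hconv₁ : ConvexOn ℝ Set.univ f₁) (hconv₂ : ConvexOn ℝ Set.univ f₂)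
    (hconv₃ : ConvexOn ℝ Set.univ f₃)
    (hdiff₁ : ∀ θ, HasFDerivAt f₁ ((innerSL ℝ) (g₁ θ)) θ)
    (hdiff₂ : ∀ θ, HasFDerivAt f₂ ((innerSL ℝ) (g₂ θ)) θ)
    (hdiff₃ : ∀ θ, HasFDerivAt f₃ ((innerSL ℝ) (g₃ θ)) θ)
    (hlip₁ : ∀ θ₁ θ₂, ‖g₁ θ₁ - g₁ θ₂‖ ≤ β * ‖θ₁ - θ₂‖)
    (hlip₂ : ∀ θ₁ θ₂, ‖g₂ θ₁ - g₂ θ₂‖ ≤ β * ‖θ₁ - θ₂‖)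
    (hlip₃ : ∀ θ₁ θ₂, ‖g₃ θ₁ - g₃ θ₂‖ ≤ β * ‖θ₁ - θ₂‖)
    (hbd₂ : ∀ θ, ‖g₂ θ‖ ≤ L) (hbd₃ : ∀ θ, ‖g₃ θ‖ ≤ L)
    (hest : ∀ θ, ‖ghat θ - (lam • g₁ θ + (1 - lam) • g₂ θ)‖ ≤ E)
    (hest' : ∀ θ, ‖ghat' θ - (lam • g₁ θ + (1 - lam) • g₃ θ)‖ ≤ E)
    (α : ℝ) (hα0 : 0 < α) (hα : α ≤ 2 / β) (θ θ' : H) :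
    ‖(θ - α • ghat θ) - (θ' - α • ghat' θ')‖
      ≤ ‖θ - θ'‖ + 2 * α * ((1 - lam) * L + E) := by
  set G : H → H := fun z => lam • g₁ z + (1 - lam) • g₂ z with hG
  set G' : H → H := fun z => lam • g₁ z + (1 - lam) • g₃ z with hG'
  set d : H := θ - θ' with hdd
  set u : H := g₁ θ - g₁ θ' with hu
  set v : H := g₂ θ - g₂ θ' with hv
  set w : H := G θ - G θ' with hw
  have hwuv : w = lam • u + (1 - lam) • v := by
    simp only [hw, hG, hu, hv, smul_sub]; abel
  -- combined co-coercivity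
  have c1 := cocoercive f₁ g₁ β hβ hconv₁ hdiff₁ hlip₁ θ' θ
  have c2 := cocoercive f₂ g₂ β hβ hconv₂ hdiff₂ hlip₂ θ' θ
  have hwsq : ‖w‖ ^ 2 ≤ lam * ‖u‖ ^ 2 + (1 - lam) * ‖v‖ ^ 2 := by
    rw [hwuv]
    have h1 : ‖lam • u + (1 - lam) • v‖ ^ 2
        = lam ^ 2 * ‖u‖ ^ 2 + 2 * (lam * (1 - lam)) * ⟪u, v⟫ + (1 - lam) ^ 2 * ‖v‖ ^ 2 := by
      rw [norm_add_sq_real]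
      rw [norm_smul, norm_smul, real_inner_smul_left, real_inner_smul_right]
      rw [Real.norm_eq_abs, Real.norm_eq_abs, abs_of_nonneg hlam0,
        abs_of_nonneg (by linarith : (0:ℝ) ≤ 1 - lam)]
      ring
    have h2 : 2 * ⟪u, v⟫ ≤ ‖u‖ ^ 2 + ‖v‖ ^ 2 := by
      have := norm_sub_sq_real u v
      nlinarith [sq_nonneg ‖u - v‖]
    nlinarith [mul_nonneg hlam0 (by linarith : (0:ℝ) ≤ 1 - lam)]
  have hcoco : (1 / β) * ‖w‖ ^ 2 ≤ ⟪w, d⟫ := by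
    have hinner : ⟪w, d⟫ = lam * ⟪u, d⟫ + (1 - lam) * ⟪v, d⟫ := by
      rw [hwuv, inner_add_left, real_inner_smul_left, real_inner_smul_left]
    rw [hinner]
    have hb : 0 < 1 / β := by positivity
    nlinarith [mul_le_mul_of_nonneg_left c1 hlam0,
      mul_le_mul_of_nonneg_left c2 (by linarith : (0:ℝ) ≤ 1 - lam),
      mul_le_mul_of_nonneg_left hwsq (le_of_lt hb)]
  -- nonexpansiveness of the exact gradient step
  have hnonexp : ‖(θ - α • G θ) - (θ' - α • G θ')‖ ≤ ‖d‖ := by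
    have hvec : (θ - α • G θ) - (θ' - α • G θ') = d - α • w := by
      simp only [hdd, hw, smul_sub]; abel
    rw [hvec]
    have hsq : ‖d - α • w‖ ^ 2 ≤ ‖d‖ ^ 2 := by
      rw [norm_sub_sq_real, real_inner_smul_right, norm_smul, Real.norm_eq_abs,
        abs_of_pos hα0]
      have hαβ : α * α ≤ α * (2 / β) := by nlinarith
      have h2β : α * (2 / β) * ‖w‖ ^ 2 ≤ 2 * α * ⟪d, w⟫ := by
        rw [real_inner_comm]
        have := mul_le_mul_of_nonneg_left hcoco (by positivity : (0:ℝ) ≤ 2 * α)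
        calc α * (2 / β) * ‖w‖ ^ 2 = 2 * α * ((1 / β) * ‖w‖ ^ 2) := by ring
          _ ≤ 2 * α * ⟪w, d⟫ := this
      nlinarith [sq_nonneg ‖w‖, mul_le_mul_of_nonneg_right hαβ (sq_nonneg ‖w‖)]
    nlinarith [norm_nonneg (d - α • w), norm_nonneg d]
  -- decomposition
  have hdecomp : (θ - α • ghat θ) - (θ' - α • ghat' θ')
      = ((θ - α • G θ) - (θ' - α • G θ')) + α • (G θ - ghat θ)
        + α • (ghat' θ' - G' θ') + α • (G' θ' - G θ') := by
    simp only [smul_sub]; abel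
  have hb1 : ‖α • (G θ - ghat θ)‖ ≤ α * E := by
    rw [norm_smul, Real.norm_eq_abs, abs_of_pos hα0, norm_sub_rev]
    exact mul_le_mul_of_nonneg_left (hest θ) (le_of_lt hα0)
  have hb2 : ‖α • (ghat' θ' - G' θ')‖ ≤ α * E := by
    rw [norm_smul, Real.norm_eq_abs, abs_of_pos hα0]
    exact mul_le_mul_of_nonneg_left (hest' θ') (le_of_lt hα0)
  have hb3 : ‖α • (G' θ' - G θ')‖ ≤ α * ((1 - lam) * (2 * L)) := by
    have hvec : G' θ' - G θ' = (1 - lam) • (g₃ θ' - g₂ θ') := by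
      simp only [hG, hG', smul_sub]; abel
    rw [hvec, norm_smul, norm_smul, Real.norm_eq_abs, Real.norm_eq_abs,
      abs_of_pos hα0, abs_of_nonneg (by linarith : (0:ℝ) ≤ 1 - lam)]
    have h32 : ‖g₃ θ' - g₂ θ'‖ ≤ 2 * L := by
      calc ‖g₃ θ' - g₂ θ'‖ ≤ ‖g₃ θ'‖ + ‖g₂ θ'‖ := norm_sub_le _ _
        _ ≤ 2 * L := by linarith [hbd₂ θ', hbd₃ θ']
    have := mul_le_mul_of_nonneg_left h32 (by linarith : (0:ℝ) ≤ 1 - lam)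
    nlinarith
  calc ‖(θ - α • ghat θ) - (θ' - α • ghat' θ')‖
      ≤ ‖((θ - α • G θ) - (θ' - α • G θ')) + α • (G θ - ghat θ)
          + α • (ghat' θ' - G' θ')‖ + ‖α • (G' θ' - G θ')‖ := by
        rw [hdecomp]; exact norm_add_le _ _
    _ ≤ ‖((θ - α • G θ) - (θ' - α • G θ')) + α • (G θ - ghat θ)‖
          + ‖α • (ghat' θ' - G' θ')‖ + ‖α • (G' θ' - G θ')‖ := by
        gcongr; exact norm_add_le _ _
    _ ≤ ‖(θ - α • G θ) - (θ' - α • G θ')‖ + ‖α • (G θ - ghat θ)‖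
          + ‖α • (ghat' θ' - G' θ')‖ + ‖α • (G' θ' - G θ')‖ := by
        gcongr; exact norm_add_le _ _
    _ ≤ ‖d‖ + α * E + α * E + α * ((1 - lam) * (2 * L)) := by
        gcongr
    _ = ‖θ - θ'‖ + 2 * α * ((1 - lam) * L + E) := by rw [hdd]; ring
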